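/- arXiv:1309.7567 — 2 statements merged into one kernel-verified Lean document; each statement's English description precedes it below -/
import Mathlib

section
/- For every integer n ≥ 3, the following three statements are equivalent: (i) f(n) ≠ L(n); (ii) f(n) = L(n) − 1; (iii) C(n, L(n) − 1) > 2^n/(n+1). -/
/-!
Below the middle, consecutive binomial coefficients grow by a factor `(n - k) / (k + 1)`, which is
at least `(n + 1) / n` as long as `2 (k + 1) ≤ n`. Hence once `C(n, k)` exceeds `2^n / (n + 1)`,
the next coefficient already exceeds `2^n / n`, so `L(n) - 1 ≤ f(n) ≤ L(n)`; here `L(n) ≤ n / 2`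
because the central coefficient exceeds `2^n / n`. Finally `C(n, 0) = 1 ≤ 2^n / (n + 1)`, so
condition (iii) forces `L(n) - 1` to be a legitimate candidate for `f(n)`.
-/

noncomputable def f (n : ℕ) : ℕ :=
  sInf {k : ℕ | 0 < k ∧ (n.choose k : ℝ) > 2 ^ n / (n + 1)}

noncomputable def L (n : ℕ) : ℕ :=
  sInf {k : ℕ | 0 < k ∧ (n.choose k : ℝ) > 2 ^ n / n}

theorem Nat.two_pow_lt_mul_choose_half {n : ℕ} (hn : 3 ≤ n) : 2 ^ n < n * n.choose (n / 2) := by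
  have hmid : 3 ≤ n.choose (n / 2) := hn.trans (by simpa using Nat.choose_le_middle 1 n)
  obtain ⟨m, rfl⟩ : ∃ m, n = m + 2 := ⟨n - 2, by omega⟩
  have hsum := Nat.sum_range_choose (m + 2)
  rw [Finset.sum_range_succ', Finset.sum_range_succ, Nat.choose_self, Nat.choose_zero_right]
    at hsum
  have hinner : ∑ i ∈ Finset.range (m + 1), (m + 2).choose (i + 1)
      ≤ (m + 1) * (m + 2).choose ((m + 2) / 2) := by
    simpa using Finset.sum_le_card_nsmul (Finset.range (m + 1)) _ _
      (fun i _ => Nat.choose_le_middle (i + 1) (m + 2))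
  nlinarith

theorem Nat.succ_mul_choose_le_mul_choose_succ {n k : ℕ} (hk : 2 * (k + 1) ≤ n) :
    (n + 1) * n.choose k ≤ n * n.choose (k + 1) := by
  have hratio : (n + 1) * (k + 1) ≤ n * (n - k) := by
    obtain ⟨m, rfl⟩ : ∃ m, n = 2 * (k + 1) + m := ⟨n - 2 * (k + 1), by omega⟩
    rw [show 2 * (k + 1) + m - k = k + 2 + m by omega]
    nlinarith
  refine Nat.le_of_mul_le_mul_right ?_ k.succ_pos
  calc (n + 1) * n.choose k * (k + 1) = n.choose k * ((n + 1) * (k + 1)) := by ring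
    _ ≤ n.choose k * (n * (n - k)) := Nat.mul_le_mul_left _ hratio
    _ = n * (n.choose (k + 1) * (k + 1)) := by rw [Nat.choose_succ_right_eq]; ring
    _ = n * n.choose (k + 1) * (k + 1) := by ring

theorem Nat.div_lt_choose_succ_of_div_succ_lt_choose {n k : ℕ} {x : ℝ} (hk : 2 * (k + 1) ≤ n)
    (h : x / (n + 1) < n.choose k) : x / n < n.choose (k + 1) := by
  have hn : (0 : ℝ) < n := by exact_mod_cast (show 0 < n by omega)
  have hgrowth : ((n + 1) * n.choose k : ℝ) ≤ n * n.choose (k + 1) := by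
    exact_mod_cast Nat.succ_mul_choose_le_mul_choose_succ hk
  rw [div_lt_iff₀ (by positivity)] at h
  rw [div_lt_iff₀ hn]
  linarith

theorem one_le_two_pow_div_succ (n : ℕ) : 1 ≤ (2 : ℝ) ^ n / (n + 1) := by
  rw [one_le_div (by positivity)]
  exact_mod_cast Nat.lt_two_pow_self

section

variable {n : ℕ}

theorem half_mem_L_set (hn : 3 ≤ n) :
    n / 2 ∈ {k : ℕ | 0 < k ∧ (n.choose k : ℝ) > 2 ^ n / n} := by
  refine ⟨by omega, ?_⟩
  rw [gt_iff_lt, div_lt_iff₀ (by exact_mod_cast (show 0 < n by omega))]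
  exact_mod_cast (Nat.two_pow_lt_mul_choose_half hn).trans_eq (mul_comm _ _)

theorem L_mem (hn : 3 ≤ n) : 0 < L n ∧ (n.choose (L n) : ℝ) > 2 ^ n / n :=
  Nat.sInf_mem ⟨_, half_mem_L_set hn⟩

theorem L_le_half (hn : 3 ≤ n) : L n ≤ n / 2 :=
  Nat.sInf_le (half_mem_L_set hn)

theorem L_mem_f_set (hn : 3 ≤ n) :
    L n ∈ {k : ℕ | 0 < k ∧ (n.choose k : ℝ) > 2 ^ n / (n + 1)} := by
  obtain ⟨hpos, hL⟩ := L_mem hn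
  refine ⟨hpos, lt_trans ?_ hL⟩
  exact div_lt_div_of_pos_left (by positivity) (by exact_mod_cast (show 0 < n by omega))
    (by linarith)

theorem f_mem (hn : 3 ≤ n) : 0 < f n ∧ (n.choose (f n) : ℝ) > 2 ^ n / (n + 1) :=
  Nat.sInf_mem ⟨_, L_mem_f_set hn⟩

theorem f_le_L (hn : 3 ≤ n) : f n ≤ L n :=
  Nat.sInf_le (L_mem_f_set hn)

theorem L_sub_one_le_f (hn : 3 ≤ n) : L n - 1 ≤ f n := by
  by_contra! hlt
  have hhalf := L_le_half hn
  have hnext : (2 : ℝ) ^ n / n < n.choose (f n + 1) :=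
    Nat.div_lt_choose_succ_of_div_succ_lt_choose (by omega) (f_mem hn).2
  exact Nat.notMem_of_lt_sInf (show f n + 1 < L n by omega) ⟨Nat.succ_pos _, hnext⟩

end

theorem f_ne_L_iff (n : ℕ) (hn : 3 ≤ n) :
    (f n ≠ L n ↔ f n = L n - 1) ∧
    (f n = L n - 1 ↔ (n.choose (L n - 1) : ℝ) > 2 ^ n / (n + 1)) := by
  have hLpos := (L_mem hn).1
  have hfL := f_le_L hn
  have hLf := L_sub_one_le_f hn
  refine ⟨by omega, fun h => h ▸ (f_mem hn).2, fun h => ?_⟩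
  have hpos : 0 < L n - 1 := by
    by_contra! hzero
    rw [Nat.le_zero.mp hzero, Nat.choose_zero_right, Nat.cast_one] at h
    exact (one_le_two_pow_div_succ n).not_gt h
  have : f n ≤ L n - 1 := Nat.sInf_le ⟨hpos, h⟩
  omega
end

section
/- For every integer n ≥ 3, f(n+3) > f(n). -/
/-! Let `k = f n`. By minimality `(n+1) C(n,k-1) ≤ 2^n`, and
`(n+4) C(n+3,k) / ((n+1) C(n,k-1)) = (n+2)(n+3)(n+4) / (k (n-k+2)(n-k+3))`, which is at most `8`
once `n/4 < k ≤ n/2` and `n ≥ 12`. Hence `(n+4) C(n+3,k) ≤ 2^(n+3)`, and as `k ≤ (n+3)/2`, no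
`j ≤ k` satisfies the defining inequality at `n+3`.

The bound `k > n/4` holds because `(n+1) C(n,j) ≤ 2^n` whenever `4j ≤ n` (and `n ≥ 5`): along the
diagonal `n = 4j` this is the same three-step estimate, and moving from `n` to `n+1` multiplies
`(n+1) C(n,j)` by `(n+2)/(n+1-j) ≤ 2` when `2j ≤ n`. The cases `n < 12` are checked directly. -/

namespace Nat

theorem choose_le_choose_of_le_of_le_half {n j k : ℕ} (hjk : j ≤ k) (hk : k ≤ n / 2) :
    n.choose j ≤ n.choose k := by
  induction k, hjk using Nat.le_induction with
  | base => rfl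
  | succ k _ ih => exact (ih (by omega)).trans (choose_le_succ_of_lt_half_left (by omega))

theorem two_pow_lt_succ_mul_choose_half {n : ℕ} (hn : 2 ≤ n) :
    2 ^ n < (n + 1) * n.choose (n / 2) := by
  have hlt : ∑ i ∈ Finset.range (n + 1), n.choose i <
      ∑ _i ∈ Finset.range (n + 1), n.choose (n / 2) := by
    refine Finset.sum_lt_sum (fun i _ => choose_le_middle i n) ⟨0, by simp, ?_⟩
    have := choose_le_middle 1 n
    simp only [choose_zero_right, choose_one_right] at *
    omega
  simpa [sum_range_choose, mul_comm] using hlt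

theorem add_three_choose_succ_mul (k m : ℕ) :
    (k + m + 3).choose (k + 1) * ((k + 1) * (m + 1) * (m + 2)) =
      (k + m).choose k * ((k + m + 1) * (k + m + 2) * (k + m + 3)) := by
  have h1 := add_choose_mul_factorial_mul_factorial m k
  have h2 := add_choose_mul_factorial_mul_factorial (m + 2) (k + 1)
  rw [show m + 2 + (k + 1) = k + m + 2 + 1 by ring, add_comm m k] at *
  apply Nat.eq_of_mul_eq_mul_right (Nat.mul_pos (factorial_pos m) (factorial_pos k))
  simp only [factorial_succ, ← h1] at h2
  linear_combination h2

end Nat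

open Nat

theorem succ_mul_choose_succ_le {n k : ℕ} (hk : 2 * k ≤ n) (h : (n + 1) * n.choose k ≤ 2 ^ n) :
    (n + 2) * (n + 1).choose k ≤ 2 ^ (n + 1) := by
  refine Nat.le_of_mul_le_mul_right ?_ (show 0 < n + 1 - k by omega)
  calc (n + 2) * (n + 1).choose k * (n + 1 - k)
      = (n + 2) * ((n + 1) * n.choose k) := by rw [mul_assoc, ← choose_mul_succ_eq]; ring
    _ ≤ (n + 2) * 2 ^ n := Nat.mul_le_mul_left _ h
    _ ≤ 2 * (n + 1 - k) * 2 ^ n := Nat.mul_le_mul_right _ (by omega)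
    _ = 2 ^ (n + 1) * (n + 1 - k) := by ring

theorem succ_mul_choose_le_of_le {m n k : ℕ} (hk : 2 * k ≤ m) (hmn : m ≤ n)
    (h : (m + 1) * m.choose k ≤ 2 ^ m) : (n + 1) * n.choose k ≤ 2 ^ n := by
  induction n, hmn using Nat.le_induction with
  | base => exact h
  | succ n _ ih => exact succ_mul_choose_succ_le (by omega) ih

theorem succ_mul_add_three_choose_succ_le {k m : ℕ}
    (hcubic : (k + m + 2) * (k + m + 3) * (k + m + 4) ≤ 8 * ((k + 1) * (m + 1) * (m + 2)))
    (h : (k + m + 1) * (k + m).choose k ≤ 2 ^ (k + m)) :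
    (k + m + 4) * (k + m + 3).choose (k + 1) ≤ 2 ^ (k + m + 3) := by
  refine Nat.le_of_mul_le_mul_right ?_ (show 0 < (k + 1) * (m + 1) * (m + 2) by positivity)
  calc (k + m + 4) * (k + m + 3).choose (k + 1) * ((k + 1) * (m + 1) * (m + 2))
      = (k + m + 1) * (k + m).choose k * ((k + m + 2) * (k + m + 3) * (k + m + 4)) := by
        rw [mul_assoc, add_three_choose_succ_mul]; ring
    _ ≤ 2 ^ (k + m) * (8 * ((k + 1) * (m + 1) * (m + 2))) := Nat.mul_le_mul h hcubic
    _ = 2 ^ (k + m + 3) * ((k + 1) * (m + 1) * (m + 2)) := by ring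

theorem succ_mul_choose_four_mul_le {k : ℕ} (hk : 2 ≤ k) :
    (4 * k + 1) * (4 * k).choose k ≤ 2 ^ (4 * k) := by
  induction k, hk using Nat.le_induction with
  | base => decide
  | succ k hk ih =>
    have hcubic : (k + 3 * k + 2) * (k + 3 * k + 3) * (k + 3 * k + 4) ≤
        8 * ((k + 1) * (3 * k + 1) * (3 * k + 2)) := by
      obtain ⟨j, rfl⟩ : ∃ j, k = j + 2 := ⟨k - 2, by omega⟩
      ring_nf
      omega
    have h3 := succ_mul_add_three_choose_succ_le hcubic (by rwa [show k + 3 * k = 4 * k by ring])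
    have h4 := succ_mul_choose_succ_le (by omega) h3
    rwa [show k + 3 * k + 3 + 1 = 4 * (k + 1) by ring,
      show k + 3 * k + 3 + 2 = 4 * (k + 1) + 1 by ring] at h4

theorem succ_mul_choose_le_of_four_mul_le {n k : ℕ} (hk : 1 ≤ k) (hkn : 4 * k ≤ n)
    (hn : 5 ≤ n) : (n + 1) * n.choose k ≤ 2 ^ n := by
  obtain rfl | hk2 := eq_or_lt_of_le hk
  · exact succ_mul_choose_le_of_le (m := 5) (by omega) hn (by decide)
  · exact succ_mul_choose_le_of_le (by omega) hkn (succ_mul_choose_four_mul_le hk2)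

theorem cubic_le_of_le_three_mul {k m : ℕ} (hkm : k + 2 ≤ m) (hmk : m ≤ 3 * k + 3)
    (h : 12 ≤ k + m) :
    (k + m + 2) * (k + m + 3) * (k + m + 4) ≤ 8 * ((k + 1) * (m + 1) * (m + 2)) := by
  obtain ⟨c, rfl⟩ : ∃ c, m = k + 2 + c := ⟨m - (k + 2), by omega⟩
  have hc : c ≤ 2 * k + 1 := by omega
  have hk : 3 ≤ k := by omega
  nlinarith [Nat.mul_le_mul_left (c * c) hc, Nat.mul_le_mul_left c hc,
    Nat.mul_le_mul_left (c * k) hk, Nat.mul_le_mul_left k hk]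

theorem succ_mul_add_three_choose_le {n a : ℕ} (ha : 2 * (a + 1) ≤ n)
    (hlarge : 2 ^ n < (n + 1) * n.choose (a + 1)) (hsmall : (n + 1) * n.choose a ≤ 2 ^ n) :
    (n + 4) * (n + 3).choose (a + 1) ≤ 2 ^ (n + 3) := by
  rcases lt_or_ge n 12 with hn | hn
  · have hfinite : ∀ n < 12, ∀ a < 5, 2 * (a + 1) ≤ n → 2 ^ n < (n + 1) * n.choose (a + 1) →
        (n + 1) * n.choose a ≤ 2 ^ n → (n + 4) * (n + 3).choose (a + 1) ≤ 2 ^ (n + 3) := by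
      decide
    exact hfinite n hn a (by omega) ha hlarge hsmall
  rcases le_or_gt (4 * (a + 1)) n with h4 | h4
  · exact absurd (succ_mul_choose_le_of_four_mul_le (by omega) h4 (by omega)) hlarge.not_ge
  obtain ⟨m, rfl⟩ : ∃ m, n = a + m := ⟨n - a, by omega⟩
  exact succ_mul_add_three_choose_succ_le
    (cubic_le_of_le_three_mul (by omega) (by omega) (by omega)) hsmall

theorem cast_choose_gt_iff (n k : ℕ) :
    (n.choose k : ℝ) > 2 ^ n / (n + 1) ↔ 2 ^ n < (n + 1) * n.choose k := by
  rw [gt_iff_lt, div_lt_iff₀ (by positivity), ← Nat.cast_lt (α := ℝ)]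
  push_cast
  rw [mul_comm]

theorem f_eq_sInf (n : ℕ) : f n = sInf {k : ℕ | 0 < k ∧ 2 ^ n < (n + 1) * n.choose k} := by
  simp only [f, cast_choose_gt_iff]

theorem f_spec {n : ℕ} (hn : 2 ≤ n) :
    0 < f n ∧ f n ≤ n / 2 ∧ 2 ^ n < (n + 1) * n.choose (f n) := by
  have hhalf : n / 2 ∈ {k : ℕ | 0 < k ∧ 2 ^ n < (n + 1) * n.choose k} :=
    ⟨by omega, two_pow_lt_succ_mul_choose_half hn⟩
  rw [f_eq_sInf]
  exact ⟨(Nat.sInf_mem ⟨_, hhalf⟩).1, Nat.sInf_le hhalf, (Nat.sInf_mem ⟨_, hhalf⟩).2⟩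

theorem succ_mul_choose_f_sub_one_le (n : ℕ) : (n + 1) * n.choose (f n - 1) ≤ 2 ^ n := by
  rcases lt_or_ge (f n) 2 with h | h
  · rw [show f n - 1 = 0 by omega, choose_zero_right, mul_one]
    exact Nat.lt_two_pow_self
  · have hnot := Nat.notMem_of_lt_sInf (s := {k : ℕ | 0 < k ∧ 2 ^ n < (n + 1) * n.choose k})
      (m := f n - 1) (by rw [← f_eq_sInf]; omega)
    simp only [Set.mem_ofPred_eq, not_and, not_lt] at hnot
    exact hnot (by omega)

theorem lt_f_of_succ_mul_choose_le {n k : ℕ} (hn : 2 ≤ n) (hk : k ≤ n / 2)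
    (h : (n + 1) * n.choose k ≤ 2 ^ n) : k < f n := by
  obtain ⟨-, -, hlarge⟩ := f_spec hn
  by_contra! hfk
  have hmono := Nat.mul_le_mul_left (n + 1) (choose_le_choose_of_le_of_le_half hfk hk)
  exact (hlarge.trans_le (hmono.trans h)).false

theorem f_add_three_gt (n : ℕ) (hn : 3 ≤ n) : f (n + 3) > f n := by
  obtain ⟨hpos, hhalf, hlarge⟩ := f_spec (n := n) (by omega)
  have hsmall := succ_mul_choose_f_sub_one_le n
  obtain ⟨a, ha⟩ : ∃ a, f n = a + 1 := ⟨f n - 1, by omega⟩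
  rw [ha] at hhalf hlarge ⊢
  rw [ha, Nat.add_sub_cancel] at hsmall
  exact lt_f_of_succ_mul_choose_le (by omega) (by omega)
    (succ_mul_add_three_choose_le (by omega) hlarge hsmall)
end
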